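/- Let (A, \mu, \alpha) be a multiplicative Hom-associative algebra. On A^{\otimes n+1} define the cyclic operator t_n(a_0 \otimes ... \otimes a_n) = (-1)^n a_n \otimes a_0 \otimes ... \otimes a_{n-1}, the Hochschild boundary b(a_0 \otimes ... \otimes a_n) = \sum_{i=0}^{n-1} (-1)^i \alpha(a_0) \otimes ... \otimes a_i a_{i+1} \otimes ... \otimes \alpha(a_n) + (-1)^n a_n a_0 \otimes \alpha(a_1) \otimes ... \otimes \alpha(a_{n-1}), and b' the same sum without the last term. Then (Id - t_{n-1}) b' = b (Id - t_n). -/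

import Mathlib

/-!
On elementary tensors the cyclic shift `τ` intertwines the faces: `d₀ ∘ τ = d_{n+1}` and
`d_{i+1} ∘ τ = τ ∘ d_i`. Hence `b (τ a)` consists of the last face of `a` followed by `τ`
applied to the faces of `b' a`; with the signs of `t`, the last face cancels the extra term
of `b a`, and what remains is `(Id - t) (b' a)`.
-/

/-- The space of Hochschild chains of degree `n` of `A` (the free vector space on the
elementary tensors of `A^{⊗(n+1)}`). -/
abbrev HChain (k A : Type*) [Semiring k] (n : ℕ) := (Fin (n + 1) → A) →₀ k

/-- The cyclic permutation `(a_0, …, a_n) ↦ (a_n, a_0, …, a_{n-1})`. -/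
def cycTuple {A : Type*} (n : ℕ) (a : Fin (n + 1) → A) : Fin (n + 1) → A :=
  fun j => a (j - 1)

/-- The `i`-th Hochschild face `A^{⊗(n+2)} → A^{⊗(n+1)}` on elementary tensors, twisted
by `γ` and with product `m`: for `i ≤ n` it multiplies the `i`-th and `(i+1)`-st entries
and applies `γ` to the rest; the last face multiplies the last entry into the first. -/
def cFace {A : Type*} (γ : A → A) (m : A → A → A) (n : ℕ) (i : Fin (n + 2))
    (a : Fin (n + 2) → A) : Fin (n + 1) → A :=
  if (i : ℕ) = n + 1 then
    fun j => if (j : ℕ) = 0 then m (a (Fin.last (n + 1))) (a 0) else γ (a j.castSucc)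
  else fun j =>
    if (j : ℕ) < (i : ℕ) then γ (a j.castSucc)
    else if (j : ℕ) = (i : ℕ) then m (a j.castSucc) (a j.succ)
    else γ (a j.succ)

section Faces

variable {A : Type*}

@[simp]
lemma cycTuple_zero (n : ℕ) (a : Fin (n + 1) → A) : cycTuple n a 0 = a (Fin.last n) := by
  simp only [cycTuple]
  congr 1
  ext
  simp

@[simp]
lemma cycTuple_succ (n : ℕ) (a : Fin (n + 1) → A) (j : Fin n) :
    cycTuple n a j.succ = a j.castSucc := by
  rw [cycTuple, ← Fin.coeSucc_eq_succ, add_sub_cancel_right]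

@[simp]
lemma cycTuple_last (n : ℕ) (a : Fin (n + 2) → A) :
    cycTuple (n + 1) a (Fin.last (n + 1)) = a (Fin.last n).castSucc :=
  cycTuple_succ (n + 1) a (Fin.last n)

@[simp]
lemma cycTuple_one (n : ℕ) (a : Fin (n + 2) → A) : cycTuple (n + 1) a 1 = a 0 :=
  cycTuple_succ (n + 1) a 0

variable (γ : A → A) (m : A → A → A) (n : ℕ)

@[simp]
lemma cFace_castSucc_apply (i j : Fin (n + 1)) (a : Fin (n + 2) → A) :
    cFace γ m n i.castSucc a j =
      if j < i then γ (a j.castSucc) else if j = i then m (a j.castSucc) (a j.succ)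
      else γ (a j.succ) := by
  rw [cFace, if_neg (by simp [i.is_le.trans_lt n.lt_succ_self |>.ne])]
  simp only [Fin.val_castSucc, ← Fin.lt_def, Fin.val_inj]

@[simp]
lemma cFace_last_apply_zero (a : Fin (n + 2) → A) :
    cFace γ m n (Fin.last (n + 1)) a 0 = m (a (Fin.last (n + 1))) (a 0) := by
  simp [cFace]

@[simp]
lemma cFace_last_apply_succ (j : Fin n) (a : Fin (n + 2) → A) :
    cFace γ m n (Fin.last (n + 1)) a j.succ = γ (a j.succ.castSucc) := by
  simp [cFace]

lemma cFace_zero_cycTuple (a : Fin (n + 2) → A) :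
    cFace γ m n 0 (cycTuple (n + 1) a) = cFace γ m n (Fin.last (n + 1)) a := by
  funext j
  rw [← Fin.castSucc_zero, cFace_castSucc_apply]
  cases j using Fin.cases <;> simp

lemma cFace_succ_cycTuple (i : Fin (n + 1)) (a : Fin (n + 2) → A) :
    cFace γ m n i.succ (cycTuple (n + 1) a) = cycTuple n (cFace γ m n i.castSucc a) := by
  funext j
  induction i using Fin.lastCases with
  | last => cases j using Fin.cases <;> simp [Fin.castSucc_lt_last]
  | cast i =>
    rw [Fin.succ_castSucc, cFace_castSucc_apply]
    cases j using Fin.cases <;> simp [(Fin.castSucc_lt_last i).not_gt, (Fin.castSucc_lt_last i).ne']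

end Faces

@[simp]
lemma Finsupp.lift_apply_single_one {R M X : Type*} [Semiring R] [AddCommMonoid M] [Module R M]
    (f : X → M) (x : X) : Finsupp.lift M R X f (Finsupp.single x 1) = f x := by
  simp [Finsupp.sum_single_index]

lemma alternating_sum_castSucc_sub_cyclic {R M : Type*} [CommRing R] [AddCommGroup M]
    [Module R M] {n : ℕ} (u v : Fin (n + 2) → M) (w : Fin (n + 1) → M)
    (h_zero : v 0 = u (Fin.last (n + 1))) (h_succ : ∀ i, v i.succ = w i) :
    ∑ i : Fin (n + 1), (-1 : R) ^ (i : ℕ) • (u i.castSucc - (-1 : R) ^ n • w i) =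
      ∑ i : Fin (n + 2), (-1 : R) ^ (i : ℕ) • u i
        - (-1 : R) ^ (n + 1) • ∑ i : Fin (n + 2), (-1 : R) ^ (i : ℕ) • v i := by
  have h_sign : ∀ i : ℕ, (-1 : R) ^ (n + 1) * (-1) ^ (i + 1) = (-1) ^ i * (-1) ^ n := by
    intro i
    ring
  rw [Fin.sum_univ_castSucc (f := fun i => (-1 : R) ^ (i : ℕ) • u i),
    Fin.sum_univ_succ (f := fun i => (-1 : R) ^ (i : ℕ) • v i)]
  simp only [h_zero, h_succ, Fin.val_succ, Fin.val_last, Fin.val_zero, pow_zero, one_smul,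
    smul_add, smul_sub, Finset.sum_sub_distrib, Finset.smul_sum, smul_smul, h_sign,
    Fin.val_castSucc]
  abel

theorem stmt_14_general {k A : Type*} [Field k] [NonUnitalNonAssocRing A] [Module k A]
    (α : A →ₗ[k] A)
    (n : ℕ)
    (T : (m : ℕ) → HChain k A m →ₗ[k] HChain k A m)
    (hT : ∀ m : ℕ, T m = (Finsupp.lift (HChain k A m) k (Fin (m + 1) → A))
      (fun a => ((-1 : k) ^ m) • Finsupp.single (cycTuple m a) (1 : k)))
    (b : HChain k A (n + 1) →ₗ[k] HChain k A n)
    (hb : b = (Finsupp.lift (HChain k A n) k (Fin (n + 2) → A))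
      (fun a => ∑ i : Fin (n + 2), ((-1 : k) ^ (i : ℕ)) •
        Finsupp.single (cFace (⇑α) (· * ·) n i a) (1 : k)))
    (b' : HChain k A (n + 1) →ₗ[k] HChain k A n)
    (hb' : b' = (Finsupp.lift (HChain k A n) k (Fin (n + 2) → A))
      (fun a => ∑ i : Fin (n + 1), ((-1 : k) ^ (i : ℕ)) •
        Finsupp.single (cFace (⇑α) (· * ·) n i.castSucc a) (1 : k))) :
    (LinearMap.id - T n) ∘ₗ b' = b ∘ₗ (LinearMap.id - T (n + 1)) := by
  subst hb hb'
  ext x : 2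
  simp only [LinearMap.comp_apply, Finsupp.lsingle_apply, LinearMap.sub_apply,
    LinearMap.id_apply, map_sub, Finsupp.lift_apply_single_one, hT, map_smul, map_sum]
  exact alternating_sum_castSucc_sub_cyclic
    (fun i => Finsupp.single (cFace α (· * ·) n i x) (1 : k))
    (fun i => Finsupp.single (cFace α (· * ·) n i (cycTuple (n + 1) x)) (1 : k))
    (fun i => Finsupp.single (cycTuple n (cFace α (· * ·) n i.castSucc x)) (1 : k))
    (by rw [cFace_zero_cycTuple]) (fun i => by rw [cFace_succ_cycTuple])

/-- For a multiplicative Hom-associative algebra `A`, with `t` the signed cyclic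
operator, `b` the Hom-Hochschild boundary and `b'` its truncation,
`(Id - t_{n-1}) b' = b (Id - t_n)`. -/
theorem stmt_14 {k A : Type*} [Field k] [NonUnitalNonAssocRing A] [Module k A]
    [SMulCommClass k A A] [IsScalarTower k A A]
    (α : A →ₗ[k] A)
    (hassoc : ∀ a b c : A, α a * (b * c) = (a * b) * α c)
    (hmul : ∀ a b : A, α (a * b) = α a * α b)
    (n : ℕ)
    (T : (m : ℕ) → HChain k A m →ₗ[k] HChain k A m)
    (hT : ∀ m : ℕ, T m = (Finsupp.lift (HChain k A m) k (Fin (m + 1) → A))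
      (fun a => ((-1 : k) ^ m) • Finsupp.single (cycTuple m a) (1 : k)))
    (b : HChain k A (n + 1) →ₗ[k] HChain k A n)
    (hb : b = (Finsupp.lift (HChain k A n) k (Fin (n + 2) → A))
      (fun a => ∑ i : Fin (n + 2), ((-1 : k) ^ (i : ℕ)) •
        Finsupp.single (cFace (⇑α) (· * ·) n i a) (1 : k)))
    (b' : HChain k A (n + 1) →ₗ[k] HChain k A n)
    (hb' : b' = (Finsupp.lift (HChain k A n) k (Fin (n + 2) → A))
      (fun a => ∑ i : Fin (n + 1), ((-1 : k) ^ (i : ℕ)) •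
        Finsupp.single (cFace (⇑α) (· * ·) n i.castSucc a) (1 : k))) :
    (LinearMap.id - T n) ∘ₗ b' = b ∘ₗ (LinearMap.id - T (n + 1)) :=
  stmt_14_general α n T hT b hb b' hb'
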